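/- arXiv:1612.09171 — 2 statements merged into one kernel-verified Lean document; each statement's English description precedes it below -/
import Mathlib

section
/- Progress of a single proximal coordinate update, first inequality: let j be a coordinate and suppose Γ_j ≥ L_j, where L_j is a constant such that |∇_j f(x + r·e_j) − ∇_j f(x)| ≤ L_j·|r| for all x ∈ ℝⁿ and r ∈ ℝ. Fix x ∈ ℝⁿ, let g := ∇_j f(x), let g̃ ∈ ℝ be arbitrary (a possibly inaccurate gradient value), set d̃ := d̂(g̃, x_j, Γ_j, Ψ_j), and let x' := x + d̃·e_j. Then F(x) − F(x') ≥ (Γ_j/2)·d̃² − |g − g̃|·|d̃|. -/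
/-!
Along the line `t ↦ x + t • eⱼ`, the Lipschitz bound on `∇ⱼ f` gives the descent inequality
`f (x + d • eⱼ) ≤ f x + ∇ⱼ f(x) d + (Lⱼ/2) d²` (the function
`t ↦ f (x + t • eⱼ) - ∇ⱼ f(x) t - (Lⱼ/2) t²` is antitone for `t ≥ 0`). On the separable part,
comparing `W` at the maximiser `d̃` with `W` at `(1 - t) d̃` and using convexity of `Ψⱼ` on
`[xⱼ, xⱼ + d̃]` gives `W(d̃) ≥ (Γⱼ/2)(1 - t) d̃²`; letting `t → 0⁺`, `W(d̃) ≥ (Γⱼ/2) d̃²`.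
Adding the two and paying `|g - g̃| |d̃|` for the use of `g̃` in place of `g` gives the claim.
-/

/-- The proximal function `W(d, g, x, Γ, Ψ) = -g·d - (Γ/2)·d² + Ψ(x) - Ψ(x + d)`. -/
noncomputable def W (d g x Γ : ℝ) (Ψ : ℝ → ℝ) : ℝ :=
  -(g * d) - Γ / 2 * d ^ 2 + Ψ x - Ψ (x + d)

/-- The `j`-th partial derivative (coordinate of the gradient) of `f` at `x`. -/
noncomputable def grad {n : ℕ} (f : (Fin n → ℝ) → ℝ) (x : Fin n → ℝ) (j : Fin n) : ℝ :=
  fderiv ℝ f x (Pi.single j 1)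

open Set

theorem le_add_deriv_mul_add_sq_of_abs_deriv_sub_le {φ φ' : ℝ → ℝ} {L : ℝ}
    (hφ : ∀ t, HasDerivAt φ (φ' t) t) (hL : ∀ t, |φ' t - φ' 0| ≤ L * |t|) (d : ℝ) :
    φ d ≤ φ 0 + φ' 0 * d + L / 2 * d ^ 2 := by
  wlog hd : 0 ≤ d generalizing φ φ' d
  · -- reflect: `t ↦ φ (-t)` satisfies the same hypotheses
    have hφ_neg : ∀ t, HasDerivAt (fun s => φ (-s)) (-φ' (-t)) t := fun t => by
      have h := (hφ (-t)).comp t (hasDerivAt_neg t)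
      rwa [mul_neg_one] at h
    have hL_neg : ∀ t, |-φ' (-t) - -φ' (-0)| ≤ L * |t| := fun t => by
      simpa [abs_sub_comm, neg_add_eq_sub] using hL (-t)
    simpa using this hφ_neg hL_neg (-d) (by linarith)
  set ψ : ℝ → ℝ := fun t => φ t - φ' 0 * t - L / 2 * t ^ 2
  have hψ : ∀ t, HasDerivAt ψ (φ' t - φ' 0 - L * t) t := fun t => by
    have h := ((hφ t).sub ((hasDerivAt_id t).const_mul (φ' 0))).sub
      ((hasDerivAt_pow 2 t).const_mul (L / 2))
    exact h.congr_deriv (by simp; ring)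
  have hψ_anti : AntitoneOn ψ (Ici 0) :=
    antitoneOn_of_hasDerivWithinAt_nonpos (convex_Ici 0)
      (fun t _ => (hψ t).continuousAt.continuousWithinAt)
      (fun t _ => (hψ t).hasDerivWithinAt)
      (fun t ht => by
        rw [interior_Ici, mem_Ioi] at ht
        have := hL t
        rw [abs_of_pos ht] at this
        linarith [le_of_abs_le this])
  have hψd := hψ_anti self_mem_Ici hd hd
  simp only [ψ] at hψd
  linarith

theorem le_add_fderiv_mul_add_sq_of_abs_fderiv_sub_le {E : Type*} [NormedAddCommGroup E]
    [NormedSpace ℝ E] {f : E → ℝ} (hf : Differentiable ℝ f) (x v : E) {L : ℝ}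
    (hL : ∀ r : ℝ, |fderiv ℝ f (x + r • v) v - fderiv ℝ f x v| ≤ L * |r|) (d : ℝ) :
    f (x + d • v) ≤ f x + fderiv ℝ f x v * d + L / 2 * d ^ 2 := by
  have hline : ∀ t : ℝ, HasDerivAt (fun s : ℝ => f (x + s • v)) (fderiv ℝ f (x + t • v) v) t :=
    fun t => by
      have hmove : HasDerivAt (fun s : ℝ => x + s • v) v t := by
        simpa using ((hasDerivAt_id t).smul_const v).const_add x
      exact (hf _).hasFDerivAt.comp_hasDerivAt t hmove
  simpa using le_add_deriv_mul_add_sq_of_abs_deriv_sub_le hline (by simpa using hL) d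

theorem half_mul_sq_le_W_of_isMaxOn {Ψ : ℝ → ℝ} (hΨ : ConvexOn ℝ univ Ψ) {g x Γ d : ℝ}
    (hd : IsMaxOn (fun d => W d g x Γ Ψ) univ d) : Γ / 2 * d ^ 2 ≤ W d g x Γ Ψ := by
  have key : ∀ t ∈ Ioc (0 : ℝ) 1, Γ / 2 * d ^ 2 * (2 - t) ≤ W d g x Γ Ψ + Γ / 2 * d ^ 2 := by
    rintro t ⟨ht0, ht1⟩
    have hmax : W ((1 - t) * d) g x Γ Ψ ≤ W d g x Γ Ψ := hd (mem_univ _)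
    have hconv := hΨ.2 (mem_univ (x + d)) (mem_univ x) (sub_nonneg.2 ht1) ht0.le (by ring)
    simp only [smul_eq_mul] at hconv
    rw [show (1 - t) * (x + d) + t * x = x + (1 - t) * d by ring] at hconv
    unfold W at *
    refine le_of_mul_le_mul_left ?_ ht0
    nlinarith
  have hclosed : IsClosed {t : ℝ | Γ / 2 * d ^ 2 * (2 - t) ≤ W d g x Γ Ψ + Γ / 2 * d ^ 2} :=
    isClosed_le (by fun_prop) continuous_const
  have h0 := hclosed.closure_subset_iff.2 key
    (show (0 : ℝ) ∈ closure (Ioc 0 1) by simp [closure_Ioc zero_ne_one])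
  simp only [mem_ofPred_eq] at h0
  linarith

theorem sum_apply_add_smul_single {ι : Type*} [Fintype ι] [DecidableEq ι] (Ψ : ι → ℝ → ℝ)
    (x : ι → ℝ) (j : ι) (d : ℝ) :
    ∑ k, Ψ k ((x + d • (Pi.single j 1 : ι → ℝ)) k) =
      ∑ k, Ψ k (x k) + (Ψ j (x j + d) - Ψ j (x j)) := by
  rw [← sub_eq_iff_eq_add', ← Finset.sum_sub_distrib,
    Fintype.sum_eq_single j fun k hk => by simp [hk]]
  simp

theorem single_update_progress_one_general {n : ℕ}
    (f : (Fin n → ℝ) → ℝ) (hf : Differentiable ℝ f)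
    (Ψ : Fin n → ℝ → ℝ) (hΨ : ∀ k, ConvexOn ℝ Set.univ (Ψ k))
    (F : (Fin n → ℝ) → ℝ) (hF : ∀ y, F y = f y + ∑ k, Ψ k (y k))
    (j : Fin n) (Lj Γj : ℝ)
    (hLj : ∀ (x : Fin n → ℝ) (r : ℝ),
      |grad f (x + r • (Pi.single j 1 : Fin n → ℝ)) j - grad f x j| ≤ Lj * |r|)
    (hΓL : Γj ≥ Lj)
    (x : Fin n → ℝ) (gtilde dtilde : ℝ)
    (hd : IsMaxOn (fun d : ℝ => W d gtilde (x j) Γj (Ψ j)) Set.univ dtilde) :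
    F x - F (x + dtilde • (Pi.single j 1 : Fin n → ℝ)) ≥
      Γj / 2 * dtilde ^ 2 - |grad f x j - gtilde| * |dtilde| := by
  have hdescent :
      f (x + dtilde • Pi.single j 1) ≤ f x + grad f x j * dtilde + Lj / 2 * dtilde ^ 2 :=
    le_add_fderiv_mul_add_sq_of_abs_fderiv_sub_le hf x _ (hLj x) dtilde
  have hprox := half_mul_sq_le_W_of_isMaxOn (hΨ j) hd
  have hinexact : -(|grad f x j - gtilde| * |dtilde|) ≤ (gtilde - grad f x j) * dtilde := by
    have h := neg_abs_le ((gtilde - grad f x j) * dtilde)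
    rwa [abs_mul, abs_sub_comm] at h
  have hΓ : Lj / 2 * dtilde ^ 2 ≤ Γj / 2 * dtilde ^ 2 := by gcongr
  rw [hF, hF, sum_apply_add_smul_single]
  unfold W at hprox
  linarith

/-- Progress of a single proximal coordinate update, first inequality:
for `Γⱼ ≥ Lⱼ`, with `g = ∇ⱼ f(x)`, `g̃` arbitrary, `d̃ = d̂(g̃, xⱼ, Γⱼ, Ψⱼ)` and
`x' = x + d̃·eⱼ`, we have `F(x) - F(x') ≥ (Γⱼ/2)·d̃² - |g - g̃|·|d̃|`. -/
theorem single_update_progress_one {n : ℕ}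
    (f : (Fin n → ℝ) → ℝ) (hf : Differentiable ℝ f) (hfc : ConvexOn ℝ Set.univ f)
    (Ψ : Fin n → ℝ → ℝ) (hΨ : ∀ k, ConvexOn ℝ Set.univ (Ψ k))
    (F : (Fin n → ℝ) → ℝ) (hF : ∀ y, F y = f y + ∑ k, Ψ k (y k))
    (j : Fin n) (Lj Γj : ℝ)
    (hLj : ∀ (x : Fin n → ℝ) (r : ℝ),
      |grad f (x + r • (Pi.single j 1 : Fin n → ℝ)) j - grad f x j| ≤ Lj * |r|)
    (hΓpos : 0 < Γj) (hΓL : Γj ≥ Lj)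
    (x : Fin n → ℝ) (gtilde dtilde : ℝ)
    (hd : IsMaxOn (fun d : ℝ => W d gtilde (x j) Γj (Ψ j)) Set.univ dtilde) :
    F x - F (x + dtilde • (Pi.single j 1 : Fin n → ℝ)) ≥
      Γj / 2 * dtilde ^ 2 - |grad f x j - gtilde| * |dtilde| :=
  single_update_progress_one_general f hf Ψ hΨ F hF j Lj Γj hLj hΓL x gtilde dtilde hd
end

section
/- Convex progress lower bound: suppose the minimum value of F is 0 and is attained at some point, let Γ > 0, let x ∈ ℝⁿ, and let ℛ := min_{p* ∈ P*} ‖x − p*‖ where P* is the (nonempty, closed) set of minimizers of F. If ℛ > 0 then Σ_{k=1}^n Ŵ(∇_k f(x), x_k, Γ, Ψ_k) ≥ min{ 1/2 , F(x)/(2Γℛ²) }·F(x). -/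
/-- `Ŵ(g, x, Γ, Ψ) = sup_{d ∈ ℝ} W(d, g, x, Γ, Ψ)`. -/
noncomputable def What (g x Γ : ℝ) (Ψ : ℝ → ℝ) : ℝ := ⨆ d : ℝ, W d g x Γ Ψ

/-!
Step from `x` towards the minimiser `p*` by `d_k = β (p*_k - x_k)` in every coordinate. Convexity
of `Ψ_k` along the chord and the first-order convexity inequality for `f` give
`Σ_k Ŵ_k ≥ β F(x) - (Γ/2) β² ℛ²` for every `β ∈ [0, 1]`; the choice `β = min 1 (F(x) / (Γ ℛ²))`
turns this into the bound.
-/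

open Set

theorem ConvexOn.add_rightDeriv_mul_sub_le {Ψ : ℝ → ℝ} (hΨ : ConvexOn ℝ univ Ψ) (x y : ℝ) :
    Ψ x + derivWithin Ψ (Ioi x) x * (y - x) ≤ Ψ y := by
  have hx : x ∈ interior univ := by simp
  rcases lt_trichotomy y x with hyx | rfl | hxy
  · have h := (hΨ.slope_le_leftDeriv_of_mem_interior (mem_univ y) hx hyx).trans
      (hΨ.leftDeriv_le_rightDeriv_of_mem_interior hx)
    rw [slope_def_field, div_le_iff₀ (sub_pos.2 hyx)] at h
    nlinarith
  · simp
  · have h := hΨ.rightDeriv_le_slope_of_mem_interior hx (mem_univ y) hxy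
    rw [slope_def_field, le_div_iff₀ (sub_pos.2 hxy)] at h
    linarith

theorem ConvexOn.add_fderiv_sub_le {E : Type*} [NormedAddCommGroup E] [NormedSpace ℝ E]
    {f : E → ℝ} (hfc : ConvexOn ℝ univ f) {x : E} (hf : DifferentiableAt ℝ f x) (y : E) :
    f x + fderiv ℝ f x (y - x) ≤ f y := by
  set φ : ℝ → ℝ := f ∘ AffineMap.lineMap x y
  have hφc : ConvexOn ℝ univ φ := by
    simpa only [preimage_univ] using hfc.comp_affineMap (AffineMap.lineMap x y)
  have hφd : HasDerivAt φ (fderiv ℝ f x (y - x)) 0 := by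
    have hline := AffineMap.hasDerivAt_lineMap (a := x) (b := y) (x := (0 : ℝ))
    rw [← AffineMap.lineMap_apply_zero x y (k := ℝ)] at hf
    simpa [φ] using hf.hasFDerivAt.comp_hasDerivAt (0 : ℝ) hline
  have h := hφc.le_slope_of_hasDerivAt (mem_univ 0) (mem_univ 1) zero_lt_one hφd
  simp only [slope_def_field, φ, Function.comp_apply, AffineMap.lineMap_apply_one,
    AffineMap.lineMap_apply_zero, sub_zero, div_one] at h
  linarith

theorem sum_grad_mul_eq_fderiv {n : ℕ} (f : (Fin n → ℝ) → ℝ) (x v : Fin n → ℝ) :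
    ∑ k, grad f x k * v k = fderiv ℝ f x v := by
  conv_rhs => rw [← Finset.univ_sum_single v]
  simp only [map_sum, grad]
  refine Finset.sum_congr rfl fun k _ => ?_
  rw [mul_comm, ← smul_eq_mul, ← map_smul, ← Pi.single_smul, smul_eq_mul, mul_one]

section Proximal

variable {Ψ : ℝ → ℝ} {Γ : ℝ}

-- With the subgradient `s` of `Ψ` at `x`, `W d ≤ -(g + s) d - Γ d² / 2 ≤ (g + s)² / (2Γ)`.
theorem bddAbove_range_W (hΨ : ConvexOn ℝ univ Ψ) (hΓ : 0 < Γ) (g x : ℝ) :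
    BddAbove (range fun d => W d g x Γ Ψ) := by
  set s := derivWithin Ψ (Ioi x) x
  refine ⟨(g + s) ^ 2 / (2 * Γ), ?_⟩
  rintro _ ⟨d, rfl⟩
  have hsub := hΨ.add_rightDeriv_mul_sub_le x (x + d)
  rw [le_div_iff₀ (by positivity)]
  unfold W
  nlinarith [sq_nonneg (g + s + Γ * d)]

theorem W_le_What (hΨ : ConvexOn ℝ univ Ψ) (hΓ : 0 < Γ) (d g x : ℝ) :
    W d g x Γ Ψ ≤ What g x Γ Ψ :=
  le_ciSup (bddAbove_range_W hΨ hΓ g x) d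

theorem le_W_mul_sub (hΨ : ConvexOn ℝ univ Ψ) {β : ℝ} (hβ₀ : 0 ≤ β) (hβ₁ : β ≤ 1)
    (g x p : ℝ) :
    β * (Ψ x - Ψ p) - β * (g * (p - x)) - Γ / 2 * β ^ 2 * (x - p) ^ 2 ≤
      W (β * (p - x)) g x Γ Ψ := by
  have hchord := hΨ.2 (mem_univ x) (mem_univ p) (sub_nonneg.2 hβ₁) hβ₀ (by ring)
  simp only [smul_eq_mul] at hchord
  rw [W, show x + β * (p - x) = (1 - β) * x + β * p by ring]
  linarith

end Proximal

theorem le_sum_What {n : ℕ} {f : (Fin n → ℝ) → ℝ} {x : Fin n → ℝ} (hf : DifferentiableAt ℝ f x)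
    (hfc : ConvexOn ℝ univ f) {Ψ : Fin n → ℝ → ℝ} (hΨ : ∀ k, ConvexOn ℝ univ (Ψ k))
    {Γ : ℝ} (hΓ : 0 < Γ) {β : ℝ} (hβ₀ : 0 ≤ β) (hβ₁ : β ≤ 1) (p : Fin n → ℝ) :
    β * ((f x + ∑ k, Ψ k (x k)) - (f p + ∑ k, Ψ k (p k))) -
        Γ / 2 * β ^ 2 * ∑ k, (x k - p k) ^ 2 ≤
      ∑ k, What (grad f x k) (x k) Γ (Ψ k) := by
  have hlin : f x + ∑ k, grad f x k * (p k - x k) ≤ f p := by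
    simpa only [← sum_grad_mul_eq_fderiv, Pi.sub_apply] using hfc.add_fderiv_sub_le hf p
  calc β * ((f x + ∑ k, Ψ k (x k)) - (f p + ∑ k, Ψ k (p k))) -
        Γ / 2 * β ^ 2 * ∑ k, (x k - p k) ^ 2
      ≤ ∑ k, (β * (Ψ k (x k) - Ψ k (p k)) - β * (grad f x k * (p k - x k)) -
          Γ / 2 * β ^ 2 * (x k - p k) ^ 2) := by
        simp only [Finset.sum_sub_distrib, ← Finset.mul_sum]
        linarith [mul_le_mul_of_nonneg_left hlin hβ₀]
    _ ≤ ∑ k, What (grad f x k) (x k) Γ (Ψ k) := Finset.sum_le_sum fun k _ =>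
        (le_W_mul_sub (hΨ k) hβ₀ hβ₁ _ _ _).trans (W_le_What (hΨ k) hΓ _ _ _)

-- The witness is `β = min 1 (a / b)`, the maximiser of `β a - b β² / 2` on `[0, 1]`.
theorem exists_mem_Icc_min_mul_le {a b : ℝ} (ha : 0 ≤ a) (hb : 0 ≤ b) :
    ∃ β ∈ Icc (0 : ℝ) 1, min (1 / 2) (a / (2 * b)) * a ≤ β * a - b / 2 * β ^ 2 := by
  rcases hb.eq_or_lt with rfl | hb
  · exact ⟨0, by simp, by simp⟩
  rcases le_or_gt a b with hab | hab
  · refine ⟨a / b, ⟨by positivity, div_le_one_of_le₀ hab hb.le⟩, ?_⟩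
    calc min (1 / 2) (a / (2 * b)) * a ≤ a / (2 * b) * a :=
          mul_le_mul_of_nonneg_right (min_le_right _ _) ha
      _ = a / b * a - b / 2 * (a / b) ^ 2 := by field_simp; ring
  · refine ⟨1, ⟨zero_le_one, le_rfl⟩, ?_⟩
    nlinarith [mul_le_mul_of_nonneg_right (min_le_left (1 / 2 : ℝ) (a / (2 * b))) ha]

theorem convex_progress_general {n : ℕ}
    (f : (Fin n → ℝ) → ℝ) (hf : Differentiable ℝ f) (hfc : ConvexOn ℝ Set.univ f)
    (Ψ : Fin n → ℝ → ℝ) (hΨ : ∀ k, ConvexOn ℝ Set.univ (Ψ k))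
    (F : (Fin n → ℝ) → ℝ) (hF : ∀ y, F y = f y + ∑ k, Ψ k (y k))
    (hFnonneg : ∀ y, 0 ≤ F y)
    (Γ : ℝ) (hΓpos : 0 < Γ) (x : Fin n → ℝ)
    (pstar : Fin n → ℝ) (hpstar : F pstar = 0)
    (R : ℝ) (hRdef : R = Real.sqrt (∑ k, (x k - pstar k) ^ 2)) :
    ∑ k, What (grad f x k) (x k) Γ (Ψ k) ≥
      min (1 / 2) (F x / (2 * Γ * R ^ 2)) * F x := by
  have hR2 : R ^ 2 = ∑ k, (x k - pstar k) ^ 2 := by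
    rw [hRdef, Real.sq_sqrt (by positivity)]
  obtain ⟨β, ⟨hβ₀, hβ₁⟩, hβ⟩ :=
    exists_mem_Icc_min_mul_le (hFnonneg x) (by positivity : 0 ≤ Γ * R ^ 2)
  have hprogress := le_sum_What (hf x) hfc hΨ hΓpos hβ₀ hβ₁ pstar
  rw [← hF, ← hF, hpstar, ← hR2] at hprogress
  rw [mul_assoc 2 Γ]
  linarith

/-- Convex progress lower bound: if the minimum value of `F` is `0` and is attained,
`Γ > 0`, and `ℛ = min_{p* ∈ P*} ‖x - p*‖ > 0` (Euclidean distance from `x` to the set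
of minimizers `P* = {p : F p = 0}`), then
`Σ_k Ŵ(∇_k f(x), x_k, Γ, Ψ_k) ≥ min{1/2, F(x)/(2Γℛ²)}·F(x)`. -/
theorem convex_progress {n : ℕ} (hn : 0 < n)
    (f : (Fin n → ℝ) → ℝ) (hf : Differentiable ℝ f) (hfc : ConvexOn ℝ Set.univ f)
    (Ψ : Fin n → ℝ → ℝ) (hΨ : ∀ k, ConvexOn ℝ Set.univ (Ψ k))
    (F : (Fin n → ℝ) → ℝ) (hF : ∀ y, F y = f y + ∑ k, Ψ k (y k))
    (hFnonneg : ∀ y, 0 ≤ F y)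
    (Γ : ℝ) (hΓpos : 0 < Γ) (x : Fin n → ℝ)
    (pstar : Fin n → ℝ) (hpstar : F pstar = 0)
    (R : ℝ) (hRdef : R = Real.sqrt (∑ k, (x k - pstar k) ^ 2))
    (hRmin : ∀ p : Fin n → ℝ, F p = 0 → R ≤ Real.sqrt (∑ k, (x k - p k) ^ 2))
    (hRpos : 0 < R) :
    ∑ k, What (grad f x k) (x k) Γ (Ψ k) ≥
      min (1 / 2) (F x / (2 * Γ * R ^ 2)) * F x :=
  convex_progress_general f hf hfc Ψ hΨ F hF hFnonneg Γ hΓpos x pstar hpstar R hRdef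
end
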